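/- E_max satisfies the density condition: for every finite binary string x, the sum of 2^{−E_max(X)} over all finite lists X of at least two finite binary strings, not all equal, with x ∈ X and E_max(X) > 0, is at most 1. -/

import Mathlib

open scoped ENNReal

/-- Finite binary strings. -/
abbrev BStr := List Bool

/-- A reference universal prefix Turing machine: a partial computable map from
(program, auxiliary information) to output, whose set of halting programs is
prefix-free (for each auxiliary input), and which is universal among all such
prefix machines up to an additive constant in program length. -/
structure UniversalPrefixMachine where
  U : BStr → ℕ →. ℕ
  partrec : Partrec₂ U
  prefixFree : ∀ (y : ℕ) (p q : BStr), p <+: q → (U p y).Dom → (U q y).Dom → p = q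
  universal : ∀ M : BStr → ℕ →. ℕ, Partrec₂ M →
    (∀ (y : ℕ) (p q : BStr), p <+: q → (M p y).Dom → (M q y).Dom → p = q) →
    ∃ c : ℕ, ∀ (p : BStr) (y x : ℕ), x ∈ M p y →
      ∃ q : BStr, x ∈ U q y ∧ q.length ≤ p.length + c

namespace UniversalPrefixMachine

variable (U : UniversalPrefixMachine)

/-- Conditional prefix Kolmogorov complexity `K(x|y)`: the length of a shortest
program `p` such that `U` on input `p` with auxiliary information `y` outputs `x`. -/
noncomputable def K {α β : Type*} [Encodable α] [Encodable β] (x : α) (y : β) : ℕ :=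
  sInf { n | ∃ p : BStr, p.length = n ∧ Encodable.encode x ∈ U.U p (Encodable.encode y) }

/-- Unconditional prefix Kolmogorov complexity `K(x) = K(x|ε)`. -/
noncomputable def K₀ {α : Type*} [Encodable α] (x : α) : ℕ := U.K x ([] : BStr)

/-- `E_max(X) = max_{x ∈ X} K(X|x)`. -/
noncomputable def Emax (X : List BStr) : ℕ := sSup { k | ∃ x ∈ X, k = U.K X x }

/-- `E_min(X) = min_{x ∈ X} K(X|x)`. -/
noncomputable def Emin (X : List BStr) : ℕ := sInf { k | ∃ x ∈ X, k = U.K X x }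

end UniversalPrefixMachine

/-- Boolean lexicographic order on binary strings. -/
def blex : BStr → BStr → Bool
  | [], _ => true
  | _ :: _, [] => false
  | a :: as, b :: bs => (!a && b) || (a == b && blex as bs)

/-- Length-increasing lexicographic order on binary strings. -/
def llex (x y : BStr) : Bool :=
  decide (x.length < y.length) || (decide (x.length = y.length) && blex x y)

/-- `ljoin U V` is the list consisting of the elements of `U` and of `V`,
ordered length-increasing lexicographically. -/
def ljoin (X Y : List BStr) : List BStr := (X ++ Y).mergeSort llex

/-! For `x ∈ X` we have `K(X|x) ≤ E_max(X)`, so the sum is dominated by `∑_X 2^{-K(X|x)}`.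
A shortest program for `X` given `x` determines `X`, so these programs are distinct, and they
all halt on the prefix-free machine `U(·, x)`; Kraft's inequality bounds the sum by `1`. -/

namespace InformationTheory

variable {α : Type*}

def PrefixFree (S : Set (List α)) : Prop :=
  ∀ p ∈ S, ∀ q ∈ S, p <+: q → p = q

theorem PrefixFree.mono {S T : Set (List α)} (hT : PrefixFree T) (hST : S ⊆ T) :
    PrefixFree S :=
  fun p hp q hq => hT p (hST hp) q (hST hq)

theorem PrefixFree.eq_singleton_nil {S : Set (List α)} (hS : PrefixFree S) (hnil : [] ∈ S) :
    S = {[]} :=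
  Set.eq_singleton_iff_unique_mem.mpr
    ⟨hnil, fun p hp => (hS [] hnil p hp List.nil_prefix).symm⟩

theorem PrefixFree.uniquelyDecodable {S : Set (List α)} (hS : PrefixFree S) (hnil : [] ∉ S) :
    UniquelyDecodable S := by
  intro L₁
  induction L₁ with
  | nil =>
    rintro (_ | ⟨v, L₂⟩) - h₂ hflat
    · rfl
    · have : v = [] := by simp_all
      exact absurd (this ▸ h₂ v (by simp)) hnil
  | cons w L₁ ih =>
    rintro (_ | ⟨v, L₂⟩) h₁ h₂ hflat
    · have : w = [] := by simp_all
      exact absurd (this ▸ h₁ w (by simp)) hnil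
    · simp only [List.flatten_cons] at hflat
      have hw : w ∈ S := h₁ w (by simp)
      have hv : v ∈ S := h₂ v (by simp)
      have hwv : w = v := by
        rcases List.prefix_or_prefix_of_prefix (List.prefix_append w L₁.flatten)
          (hflat ▸ List.prefix_append v L₂.flatten) with h | h
        · exact hS w hw v hv h
        · exact (hS v hv w hw h).symm
      subst hwv
      rw [ih L₂ (fun u hu => h₁ u (by simp [hu])) (fun u hu => h₂ u (by simp [hu]))
        (List.append_cancel_left hflat)]

theorem PrefixFree.sum_inv_card_pow_length_le_one [Fintype α] [Nonempty α] {S : Finset (List α)}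
    (hS : PrefixFree (S : Set (List α))) :
    ∑ w ∈ S, (1 / Fintype.card α : ℝ) ^ w.length ≤ 1 := by
  -- `{[]}` is prefix-free but not uniquely decodable.
  by_cases hnil : [] ∈ S
  · have : S = {[]} := by exact_mod_cast hS.eq_singleton_nil (by exact_mod_cast hnil)
    simp [this]
  · exact kraft_mcmillan_inequality (hS.uniquelyDecodable (by exact_mod_cast hnil))

theorem PrefixFree.tsum_two_zpow_neg_length_le_one {S : Set (List Bool)} (hS : PrefixFree S) :
    ∑' p : S, (2 : ℝ≥0∞) ^ (-(p.1.length : ℤ)) ≤ 1 := by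
  have hterm : ∀ n : ℕ, (2 : ℝ≥0∞) ^ (-(n : ℤ)) =
      ENNReal.ofReal ((1 / Fintype.card Bool : ℝ) ^ n) := by
    intro n
    rw [Fintype.card_bool, ENNReal.zpow_neg, zpow_natCast, ENNReal.ofReal_pow (by norm_num),
      one_div, Nat.cast_ofNat, ENNReal.ofReal_inv_of_pos two_pos, ENNReal.ofReal_ofNat,
      ENNReal.inv_pow]
  refine tsum_le_of_sum_le' zero_le_one fun s => ?_
  have hkraft := (hS.mono (S := ↑(s.map (Function.Embedding.subtype _)))
    (by simp)).sum_inv_card_pow_length_le_one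
  calc ∑ p ∈ s, (2 : ℝ≥0∞) ^ (-(p.1.length : ℤ))
      = ENNReal.ofReal (∑ w ∈ s.map (Function.Embedding.subtype _),
          (1 / Fintype.card Bool : ℝ) ^ w.length) := by
        rw [ENNReal.ofReal_sum_of_nonneg (fun _ _ => by positivity), Finset.sum_map]
        simp only [hterm, Function.Embedding.subtype_apply]
    _ ≤ 1 := ENNReal.ofReal_le_one.mpr hkraft

end InformationTheory

namespace UniversalPrefixMachine

open InformationTheory

variable (U : UniversalPrefixMachine)

theorem prefixFree_dom (y : ℕ) : PrefixFree {p | (U.U p y).Dom} :=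
  fun p hp q hq hpq => U.prefixFree y p q hpq hp hq

theorem exists_program_mem (n y : ℕ) : ∃ p, n ∈ U.U p y := by
  let M : BStr → ℕ →. ℕ := fun p _ => bif decide (p = []) then Part.some n else Part.none
  have hM : Partrec₂ M :=
    Partrec.cond (Primrec.eq.comp .fst (.const [])).decide.to_comp (Partrec.const' _)
      Partrec.none
  have hdom : ∀ p y, (M p y).Dom → p = [] := by
    intro p _ hp
    by_contra hne
    simp [M, hne] at hp
  obtain ⟨c, hc⟩ := U.universal M hM fun y p q _ hp hq => (hdom p y hp).trans (hdom q y hq).symm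
  obtain ⟨q, hq, -⟩ := hc [] y n (by simp [M])
  exact ⟨q, hq⟩

theorem exists_length_eq_K {α β : Type*} [Encodable α] [Encodable β] (a : α) (b : β) :
    ∃ p : BStr, p.length = U.K a b ∧ Encodable.encode a ∈ U.U p (Encodable.encode b) := by
  obtain ⟨p, hp⟩ := U.exists_program_mem (Encodable.encode a) (Encodable.encode b)
  exact Nat.sInf_mem (s := {n | ∃ p : BStr, p.length = n ∧
    Encodable.encode a ∈ U.U p (Encodable.encode b)}) ⟨p.length, p, rfl, hp⟩

theorem tsum_two_zpow_neg_K_le_one {α β : Type*} [Encodable α] [Encodable β] (b : β) :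
    ∑' a : α, (2 : ℝ≥0∞) ^ (-(U.K a b : ℤ)) ≤ 1 := by
  choose prog hlen hprog using fun a : α => U.exists_length_eq_K a b
  let f : α → {p | (U.U p (Encodable.encode b)).Dom} := fun a =>
    ⟨prog a, Part.dom_iff_mem.mpr ⟨_, hprog a⟩⟩
  have hf : Function.Injective f := by
    intro a a' h
    have hprog_eq : prog a = prog a' := congrArg Subtype.val h
    exact Encodable.encode_injective (Part.mem_unique (hprog a) (hprog_eq ▸ hprog a'))
  calc ∑' a, (2 : ℝ≥0∞) ^ (-(U.K a b : ℤ))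
      = ∑' a, (2 : ℝ≥0∞) ^ (-((f a).1.length : ℤ)) := by simp only [f, hlen]
    _ ≤ ∑' p : {p | (U.U p (Encodable.encode b)).Dom}, (2 : ℝ≥0∞) ^ (-(p.1.length : ℤ)) :=
      ENNReal.tsum_comp_le_tsum_of_injective hf fun p => (2 : ℝ≥0∞) ^ (-(p.1.length : ℤ))
    _ ≤ 1 := (U.prefixFree_dom _).tsum_two_zpow_neg_length_le_one

theorem K_le_Emax {X : List BStr} {x : BStr} (hx : x ∈ X) : U.K X x ≤ U.Emax X :=
  le_csSup ((X.finite_toSet.image fun y => U.K X y).subset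
    (by rintro _ ⟨y, hy, rfl⟩; exact ⟨y, hy, rfl⟩)).bddAbove ⟨x, hx, rfl⟩

end UniversalPrefixMachine

/-- density condition for `E_max`: for every binary string `x`, the sum
of `2^{-E_max(X)}` over all finite lists `X` of at least two binary strings, not all
equal, containing `x`, with `E_max(X) > 0`, is at most `1`. -/
theorem Emax_density (U : UniversalPrefixMachine) (x : BStr) :
    ∑' X : { X : List BStr //
        x ∈ X ∧ 2 ≤ X.length ∧ (∃ u ∈ X, ∃ v ∈ X, u ≠ v) ∧ 0 < U.Emax X },
      (2 : ℝ≥0∞) ^ (-(U.Emax X.1 : ℤ)) ≤ 1 :=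
  calc _ ≤ ∑' X : { X : List BStr //
        x ∈ X ∧ 2 ≤ X.length ∧ (∃ u ∈ X, ∃ v ∈ X, u ≠ v) ∧ 0 < U.Emax X },
          (2 : ℝ≥0∞) ^ (-(U.K X.1 x : ℤ)) :=
        ENNReal.tsum_le_tsum fun X =>
          ENNReal.zpow_le_of_le one_le_two (neg_le_neg (by exact_mod_cast U.K_le_Emax X.2.1))
    _ ≤ ∑' X : List BStr, (2 : ℝ≥0∞) ^ (-(U.K X x : ℤ)) :=
        ENNReal.tsum_comp_le_tsum_of_injective Subtype.val_injective _
    _ ≤ 1 := U.tsum_two_zpow_neg_K_le_one x
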